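/- arXiv:1704.04726 — 5 statements merged into one kernel-verified Lean document; each statement's English description precedes it below -/
import Mathlib

section
/- Let V be a finite-dimensional real inner product space with basis e₁,…,eₙ such that ⟨eᵢ, eⱼ⟩ ≤ 0 for all i ≠ j, and let e₁*,…,eₙ* be the dual basis with respect to the inner product (i.e., ⟨eᵢ*, eⱼ⟩ = δᵢⱼ). Then ⟨eᵢ*, eⱼ*⟩ ≥ 0 for all i and j. -/
/-!
Expand `x = ∑ cₖ eₖ` and split `x = x⁺ - x⁻` according to the signs of the coefficients. When
`⟪x, eₖ⟫ ≥ 0` for all `k`, the pairing `⟪x⁻, x⟫` is nonnegative, while `⟪x⁻, x⁺⟫ ≤ 0` because the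
two parts are supported on disjoint sets of basis vectors, which pair nonpositively. Hence
`‖x⁻‖² = ⟪x⁻, x⁺⟫ - ⟪x⁻, x⟫ ≤ 0`, so every coefficient of `x` is nonnegative. For `x = eⱼ*`, the
coefficient along `eᵢ` is exactly `⟪eᵢ*, eⱼ*⟫`.
-/

open scoped RealInnerProductSpace
open Finset

section

variable {V : Type*} [NormedAddCommGroup V] [InnerProductSpace ℝ V] {ι : Type*}

lemma posPart_mul_negPart_real (a : ℝ) : a⁺ * a⁻ = 0 := by
  rcases le_total 0 a with ha | ha
  · simp [negPart_eq_zero.mpr ha]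
  · simp [posPart_eq_zero.mpr ha]

lemma inner_sum_smul_sum_smul_nonpos [Fintype ι] {e : ι → V}
    (he : ∀ k l, k ≠ l → ⟪e k, e l⟫ ≤ 0) {a b : ι → ℝ} (ha : ∀ k, 0 ≤ a k) (hb : ∀ k, 0 ≤ b k)
    (hab : ∀ k, a k * b k = 0) :
    ⟪∑ k, a k • e k, ∑ l, b l • e l⟫ ≤ 0 := by
  simp only [sum_inner, inner_sum, real_inner_smul_left, real_inner_smul_right]
  refine sum_nonpos fun l _ => sum_nonpos fun k _ => ?_
  rcases eq_or_ne k l with rfl | hkl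
  · rw [mul_left_comm, ← mul_assoc, hab, zero_mul]
  · exact mul_nonpos_of_nonneg_of_nonpos (hb l) (mul_nonpos_of_nonneg_of_nonpos (ha k) (he k l hkl))

lemma Module.Basis.repr_nonneg_of_inner_nonneg [Fintype ι] (e : Module.Basis ι ℝ V)
    (he : ∀ k l, k ≠ l → ⟪e k, e l⟫ ≤ 0) {x : V} (hx : ∀ k, 0 ≤ ⟪x, e k⟫) (k : ι) :
    0 ≤ e.repr x k := by
  set xPos := ∑ l, (e.repr x l)⁺ • e l
  set xNeg := ∑ l, (e.repr x l)⁻ • e l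
  have hsplit : x = xPos - xNeg := by
    conv_lhs => rw [← e.sum_repr x]
    simp only [xPos, xNeg, ← sum_sub_distrib, ← sub_smul, posPart_sub_negPart]
  have hNeg_x : 0 ≤ ⟪xNeg, x⟫ := by
    simp only [xNeg, sum_inner, real_inner_smul_left]
    exact sum_nonneg fun l _ => mul_nonneg (negPart_nonneg _) (by rw [real_inner_comm]; exact hx l)
  have hNeg_pos : ⟪xNeg, xPos⟫ ≤ 0 :=
    inner_sum_smul_sum_smul_nonpos he (fun l => negPart_nonneg _) (fun l => posPart_nonneg _)
      fun l => by rw [mul_comm, posPart_mul_negPart_real]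
  have hNeg_zero : xNeg = 0 := by
    have hsq : ⟪xNeg, xNeg⟫ = ⟪xNeg, xPos⟫ - ⟪xNeg, x⟫ := by
      rw [← inner_sub_right, hsplit, sub_sub_cancel]
    exact inner_self_eq_zero.mp (le_antisymm (by linarith) real_inner_self_nonneg)
  have hcoeff : ∀ l, (e.repr x l)⁻ = 0 :=
    Fintype.linearIndependent_iff.mp e.linearIndependent _ hNeg_zero
  exact negPart_eq_zero.mp (hcoeff k)

lemma inner_eq_repr_of_inner_basis_eq_ite [DecidableEq ι] {e : Module.Basis ι ℝ V} {f : V}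
    {i : ι} (hf : ∀ j, ⟪f, e j⟫ = if i = j then 1 else 0) (x : V) : ⟪f, x⟫ = e.repr x i := by
  have : innerₛₗ ℝ f = e.coord i := e.ext fun j => by
    simp [hf, Finsupp.single_apply, eq_comm]
  simpa using LinearMap.congr_fun this x

end

theorem stmt0_general {V : Type*} [NormedAddCommGroup V] [InnerProductSpace ℝ V]
    {n : ℕ} (e : Module.Basis (Fin n) ℝ V) (estar : Fin n → V)
    (hdual : ∀ i j : Fin n, ⟪estar i, e j⟫ = if i = j then (1 : ℝ) else 0)
    (hneg : ∀ i j : Fin n, i ≠ j → ⟪e i, e j⟫ ≤ 0) :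
    ∀ i j : Fin n, 0 ≤ ⟪estar i, estar j⟫ := by
  intro i j
  rw [inner_eq_repr_of_inner_basis_eq_ite (hdual i)]
  refine e.repr_nonneg_of_inner_nonneg hneg (fun k => ?_) i
  rw [hdual]
  split_ifs <;> norm_num

/-- If `e` is a basis of a finite dimensional real inner product space with
`⟪e i, e j⟫ ≤ 0` for `i ≠ j`, and `estar` is the dual basis (characterized by
`⟪estar i, e j⟫ = δᵢⱼ`), then `⟪estar i, estar j⟫ ≥ 0` for all `i, j`. -/
theorem stmt0 {V : Type*} [NormedAddCommGroup V] [InnerProductSpace ℝ V]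
    [FiniteDimensional ℝ V] {n : ℕ} (e : Module.Basis (Fin n) ℝ V) (estar : Fin n → V)
    (hdual : ∀ i j : Fin n, ⟪estar i, e j⟫ = if i = j then (1 : ℝ) else 0)
    (hneg : ∀ i j : Fin n, i ≠ j → ⟪e i, e j⟫ ≤ 0) :
    ∀ i j : Fin n, 0 ≤ ⟪estar i, estar j⟫ :=
  stmt0_general e estar hdual hneg
end

section
/- Let V be a finite-dimensional real inner product space with basis e₁,…,eₙ such that ⟨eᵢ, eⱼ⟩ ≤ 0 for all i ≠ j, and let e₁*,…,eₙ* be the dual basis. Define the graph Γ on vertices {1,…,n} with an edge between i and j iff ⟨eᵢ, eⱼ⟩ < 0. Then ⟨eᵢ*, eⱼ*⟩ > 0 if and only if i and j lie in the same connected component of Γ. -/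
/-!
The coordinates of `x` in the basis `e` are `⟪e k*, x⟫`, so `⟪e i*, e j*⟫` is the `j`-th
coordinate of `e i*`. Split `x = y + z` with `y` the part of `x` supported on a set `T` of indices.
If `⟪x, y⟫ ≤ 0` and every cross term `⟪z, y⟫` is nonnegative, then `‖y‖² = ⟪x, y⟫ - ⟪z, y⟫ ≤ 0`,
so `y = 0`. Taking `T` the negative coordinates of `e i*` shows that they are all nonnegative;
taking `T` the indices not reachable from `i` shows that they vanish outside the component of `i`.
Inside it, with `c` the coordinates of `e i*`, `0 = ⟪e i*, e k⟫ = ∑ₘ cₘ ⟪e m, e k⟫` for `k ≠ i`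
is a sum of nonpositive terms, so a vanishing coordinate `c k` forces `c j = 0` for every
neighbour `j` of `k`, while `c i = ‖e i*‖² > 0`.
-/

open scoped RealInnerProductSpace
open Finset

section

variable {ι V : Type*} [NormedAddCommGroup V] [InnerProductSpace ℝ V]

def negInnerGraph (v : ι → V) : SimpleGraph ι :=
  SimpleGraph.fromRel fun i j => ⟪v i, v j⟫ < 0

lemma negInnerGraph_adj {v : ι → V} {i j : ι} : (negInnerGraph v).Adj i j ↔ ⟪v i, v j⟫ < 0 := by
  rw [negInnerGraph, SimpleGraph.fromRel_adj, real_inner_comm (v j), or_self]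
  refine ⟨And.right, fun h => ⟨?_, h⟩⟩
  rintro rfl
  exact h.not_ge real_inner_self_nonneg

namespace Module.Basis

variable (e : Basis ι ℝ V)

lemma inner_eq_repr_of_dual [DecidableEq ι] {estar : ι → V}
    (hdual : ∀ i j, ⟪estar i, e j⟫ = if i = j then (1 : ℝ) else 0) (k : ι) (v : V) :
    ⟪estar k, v⟫ = e.repr v k := by
  have : innerₛₗ ℝ (estar k) = e.coord k :=
    e.ext fun j => by simp [hdual, Finsupp.single_apply, eq_comm]
  exact LinearMap.congr_fun this v

variable [Fintype ι]

theorem repr_eq_zero_of_cross_nonneg (x : V) (T : Finset ι)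
    (hxT : ∀ j ∈ T, e.repr x j * ⟪x, e j⟫ ≤ 0)
    (hcross : ∀ k ∉ T, ∀ j ∈ T, 0 ≤ e.repr x k * e.repr x j * ⟪e k, e j⟫) :
    ∀ j ∈ T, e.repr x j = 0 := by
  classical
  set c := e.repr x
  set y := ∑ j ∈ T, c j • e j
  set z := ∑ k ∈ Tᶜ, c k • e k
  have hsplit : x = y + z := by rw [sum_add_sum_compl]; exact (e.sum_repr x).symm
  have hxy : ⟪x, y⟫ ≤ 0 := by
    rw [inner_sum]
    exact sum_nonpos fun j hj => by rw [real_inner_smul_right]; exact hxT j hj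
  have hzy : 0 ≤ ⟪z, y⟫ := by
    simp only [z, y, sum_inner, inner_sum, real_inner_smul_left, real_inner_smul_right]
    exact sum_nonneg fun j hj => sum_nonneg fun k hk => by
      rw [mul_left_comm, ← mul_assoc]; exact hcross k (mem_compl.1 hk) j hj
  have hy : y = 0 := by
    refine inner_self_eq_zero.1 (le_antisymm ?_ real_inner_self_nonneg)
    have : ⟪x, y⟫ = ⟪y, y⟫ + ⟪z, y⟫ := by conv_lhs => rw [hsplit, inner_add_left]
    linarith
  exact linearIndependent_iff'.1 e.linearIndependent T c hy

variable {e}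

section Obtuse

variable (hneg : ∀ i j, i ≠ j → ⟪e i, e j⟫ ≤ 0)
include hneg

theorem repr_nonneg_of_inner_nonneg_s1 {x : V} (hx : ∀ j, 0 ≤ ⟪x, e j⟫) (k : ι) :
    0 ≤ e.repr x k := by
  classical
  by_contra! hk
  refine hk.ne (e.repr_eq_zero_of_cross_nonneg x {j | e.repr x j < 0} ?_ ?_ k (by simpa))
  · intro j hj
    exact mul_nonpos_of_nonpos_of_nonneg (mem_filter.1 hj).2.le (hx j)
  · intro k hk j hj
    simp only [mem_filter, mem_univ, true_and, not_lt] at hk hj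
    exact mul_nonneg_of_nonpos_of_nonpos (mul_nonpos_of_nonneg_of_nonpos hk hj.le)
      (hneg k j fun h => (h ▸ hk).not_gt hj)

theorem repr_eq_zero_of_repr_eq_zero_of_inner_neg {x : V} (hx : ∀ j, 0 ≤ ⟪x, e j⟫) {j k : ι}
    (hk : e.repr x k = 0) (hjk : ⟪e j, e k⟫ < 0) : e.repr x j = 0 := by
  have hterms : ∀ m, e.repr x m * ⟪e m, e k⟫ ≤ 0 := fun m => by
    rcases eq_or_ne m k with rfl | hmk
    · simp [hk]
    · exact mul_nonpos_of_nonneg_of_nonpos (repr_nonneg_of_inner_nonneg_s1 hneg hx m) (hneg m k hmk)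
  have hsum : ⟪x, e k⟫ = ∑ m, e.repr x m * ⟪e m, e k⟫ := by
    conv_lhs => rw [← e.sum_repr x]
    simp only [sum_inner, real_inner_smul_left]
  have hzero : ∑ m, e.repr x m * ⟪e m, e k⟫ = 0 :=
    le_antisymm (sum_nonpos fun m _ => hterms m) (hsum ▸ hx k)
  exact (mul_eq_zero.1 ((sum_eq_zero_iff_of_nonpos fun m _ => hterms m).1 hzero j
    (mem_univ j))).resolve_right hjk.ne

theorem repr_ne_zero_of_reachable {x : V} (hx : ∀ j, 0 ≤ ⟪x, e j⟫) {i j : ι}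
    (hr : (negInnerGraph e).Reachable i j) (hi : e.repr x i ≠ 0) : e.repr x j ≠ 0 := by
  rw [SimpleGraph.reachable_iff_reflTransGen] at hr
  induction hr with
  | refl => exact hi
  | tail _ hadj ih =>
    exact fun hk => ih (repr_eq_zero_of_repr_eq_zero_of_inner_neg hneg hx hk
      (negInnerGraph_adj.1 hadj))

theorem repr_eq_zero_of_not_reachable {x : V} {i : ι}
    (hx : ∀ j, ¬(negInnerGraph e).Reachable i j → ⟪x, e j⟫ = 0) {j : ι}
    (hj : ¬(negInnerGraph e).Reachable i j) : e.repr x j = 0 := by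
  classical
  refine e.repr_eq_zero_of_cross_nonneg x {k | ¬(negInnerGraph e).Reachable i k} ?_ ?_ j
    (by simpa)
  · intro l hl
    rw [hx l (mem_filter.1 hl).2, mul_zero]
  · intro k hk l hl
    simp only [mem_filter, mem_univ, true_and, not_not] at hk hl
    have hkl : k ≠ l := fun h => hl (h ▸ hk)
    have horth : ⟪e k, e l⟫ = 0 := (hneg k l hkl).antisymm <|
      not_lt.1 fun hlt => hl (hk.trans (negInnerGraph_adj.2 hlt).reachable)
    rw [horth, mul_zero]

end Obtuse

end Module.Basis

end

open Module.Basis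

theorem stmt1_general {V : Type*} [NormedAddCommGroup V] [InnerProductSpace ℝ V]
    {n : ℕ} (e : Module.Basis (Fin n) ℝ V) (estar : Fin n → V)
    (hdual : ∀ i j : Fin n, ⟪estar i, e j⟫ = if i = j then (1 : ℝ) else 0)
    (hneg : ∀ i j : Fin n, i ≠ j → ⟪e i, e j⟫ ≤ 0) :
    ∀ i j : Fin n, 0 < ⟪estar i, estar j⟫ ↔
      (SimpleGraph.fromRel (fun i j : Fin n => ⟪e i, e j⟫ < 0)).Reachable i j := by
  classical
  intro i j
  have hx : ∀ k, 0 ≤ ⟪estar i, e k⟫ := fun k => by rw [hdual]; split_ifs <;> norm_num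
  have hii : e.repr (estar i) i ≠ 0 := by
    rw [← e.inner_eq_repr_of_dual hdual]
    exact inner_self_ne_zero.2 fun h => by simpa [h] using hdual i i
  rw [real_inner_comm, e.inner_eq_repr_of_dual hdual]
  constructor
  · intro hpos
    by_contra hr
    refine hpos.ne' (repr_eq_zero_of_not_reachable hneg (fun k hk => ?_) hr)
    rw [hdual, if_neg fun h : i = k => hk (h ▸ .rfl)]
  · intro hr
    exact (repr_nonneg_of_inner_nonneg_s1 hneg hx j).lt_of_ne'
      (repr_ne_zero_of_reachable hneg hx hr hii)

/-- With `e` a basis of a finite dimensional real inner product space with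
`⟪e i, e j⟫ ≤ 0` for `i ≠ j` and `estar` the dual basis, one has
`⟪estar i, estar j⟫ > 0` iff `i` and `j` lie in the same connected component of the
graph with an edge between `i ≠ j` iff `⟪e i, e j⟫ < 0`. -/
theorem stmt1 {V : Type*} [NormedAddCommGroup V] [InnerProductSpace ℝ V]
    [FiniteDimensional ℝ V] {n : ℕ} (e : Module.Basis (Fin n) ℝ V) (estar : Fin n → V)
    (hdual : ∀ i j : Fin n, ⟪estar i, e j⟫ = if i = j then (1 : ℝ) else 0)
    (hneg : ∀ i j : Fin n, i ≠ j → ⟪e i, e j⟫ ≤ 0) :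
    ∀ i j : Fin n, 0 < ⟪estar i, estar j⟫ ↔
      (SimpleGraph.fromRel (fun i j : Fin n => ⟪e i, e j⟫ < 0)).Reachable i j :=
  stmt1_general e estar hdual hneg
end

section
/- Let M be a real symmetric negative definite n×n matrix with Mᵢⱼ ≥ 0 for all i ≠ j. Then all entries of M⁻¹ are ≤ 0. Moreover if the graph with edges {i,j : Mᵢⱼ > 0} is connected, then all entries of M⁻¹ are strictly negative. -/
/-!
Write `A = -M`, a positive definite matrix with nonpositive off-diagonal entries. Such a matrix
is inverse-positive: if `A x ≥ 0` and `y` is the negative part of `x`, then `yᵀ A y ≤ 0`, because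
`x⁺` and `x⁻` have disjoint supports and only off-diagonal entries pair them; positive
definiteness forces `y = 0`. Applied to the columns of `A⁻¹` this gives `A⁻¹ ≥ 0`. For strict
positivity, row `i` of `A x = eⱼ` shows that a zero of `x ≥ 0` at `i` forces zeros at every
neighbour of `i`, so by connectivity a nonzero column of `A⁻¹` has no zeros at all.
-/

open Matrix

lemma SimpleGraph.Reachable.of_adj_imp {V : Type*} {G : SimpleGraph V} {p : V → Prop}
    (hp : ∀ ⦃u v⦄, G.Adj u v → p u → p v) {u v : V} (h : G.Reachable u v) (hu : p u) : p v := by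
  rw [SimpleGraph.reachable_iff_reflTransGen] at h
  induction h with
  | refl => exact hu
  | tail _ hadj ih => exact hp hadj ih

namespace Matrix

variable {ι : Type*} [Fintype ι] {A : Matrix ι ι ℝ} {x : ι → ℝ}

lemma negPart_dotProduct_mulVec_posPart_nonpos (hoff : Pairwise fun i k ↦ A i k ≤ 0)
    (x : ι → ℝ) : x⁻ ⬝ᵥ (A *ᵥ x⁺) ≤ 0 := by
  simp only [dotProduct, mulVec, Finset.mul_sum]
  refine Finset.sum_nonpos fun i _ ↦ Finset.sum_nonpos fun k _ ↦ ?_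
  obtain rfl | hik := eq_or_ne i k
  · rcases le_total (x i) 0 with h | h <;> simp [h]
  · exact mul_nonpos_of_nonneg_of_nonpos (negPart_nonneg _)
      (mul_nonpos_of_nonpos_of_nonneg (hoff hik) (posPart_nonneg _))

lemma PosDef.nonneg_of_mulVec_nonneg (hA : A.PosDef) (hoff : Pairwise fun i k ↦ A i k ≤ 0)
    (hAx : 0 ≤ A *ᵥ x) : 0 ≤ x := by
  have hquad : x⁻ ⬝ᵥ (A *ᵥ x⁻) ≤ 0 := by
    have hsplit : x⁻ ⬝ᵥ (A *ᵥ x⁻) = x⁻ ⬝ᵥ (A *ᵥ x⁺) - x⁻ ⬝ᵥ (A *ᵥ x) := by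
      rw [← posPart_sub_negPart x, mulVec_sub, dotProduct_sub, posPart_sub_negPart]
      ring
    rw [hsplit]
    linarith [negPart_dotProduct_mulVec_posPart_nonpos hoff x,
      dotProduct_nonneg_of_nonneg (negPart_nonneg x) hAx]
  by_contra hx
  have hpos := hA.dotProduct_mulVec_pos (mt negPart_eq_zero.1 hx)
  simp only [star_trivial] at hpos
  linarith

lemma apply_eq_zero_of_mulVec_nonneg (hoff : Pairwise fun i k ↦ A i k ≤ 0) (hx : 0 ≤ x)
    (hAx : 0 ≤ A *ᵥ x) {i k : ι} (hi : x i = 0) (hik : A i k < 0) : x k = 0 := by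
  have hterm : ∀ l ∈ Finset.univ, A i l * x l ≤ 0 := fun l _ ↦ by
    obtain rfl | hil := eq_or_ne i l
    · simp [hi]
    · exact mul_nonpos_of_nonpos_of_nonneg (hoff hil) (hx l)
  have hsum : ∑ l, A i l * x l = 0 := le_antisymm (Finset.sum_nonpos hterm) (hAx i)
  simpa [hik.ne] using (Finset.sum_eq_zero_iff_of_nonpos hterm).1 hsum k (Finset.mem_univ k)

lemma PosDef.pos_of_mulVec_nonneg (hA : A.PosDef) (hoff : Pairwise fun i k ↦ A i k ≤ 0)
    (hconn : (SimpleGraph.fromRel fun i k ↦ A i k < 0).Connected) (hAx : 0 ≤ A *ᵥ x)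
    (hx0 : x ≠ 0) (i : ι) : 0 < x i := by
  have hx := hA.nonneg_of_mulVec_nonneg hoff hAx
  have hprop : ∀ ⦃u v⦄, (SimpleGraph.fromRel fun i k ↦ A i k < 0).Adj u v →
      x u = 0 → x v = 0 := by
    rintro u v ⟨-, huv | hvu⟩ hu
    · exact apply_eq_zero_of_mulVec_nonneg hoff hx hAx hu huv
    · exact apply_eq_zero_of_mulVec_nonneg hoff hx hAx hu (by rwa [← hA.isHermitian.apply u v])
  refine (hx i).lt_of_ne fun hi ↦ hx0 (funext fun k ↦ ?_)
  exact (hconn.preconnected i k).of_adj_imp hprop hi.symm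

variable [DecidableEq ι]

lemma PosDef.mulVec_col_inv (hA : A.PosDef) (j : ι) : A *ᵥ A⁻¹.col j = Pi.single j 1 := by
  rw [← mulVec_single_one, mulVec_mulVec,
    mul_nonsing_inv A ((isUnit_iff_isUnit_det A).1 hA.isUnit), one_mulVec]

lemma PosDef.inv_apply_nonneg (hA : A.PosDef) (hoff : Pairwise fun i k ↦ A i k ≤ 0) (i j : ι) :
    0 ≤ A⁻¹ i j :=
  hA.nonneg_of_mulVec_nonneg hoff (hA.mulVec_col_inv j ▸ Pi.single_nonneg.2 zero_le_one) i

lemma PosDef.inv_apply_pos (hA : A.PosDef) (hoff : Pairwise fun i k ↦ A i k ≤ 0)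
    (hconn : (SimpleGraph.fromRel fun i k ↦ A i k < 0).Connected) (i j : ι) : 0 < A⁻¹ i j := by
  have hcol := hA.mulVec_col_inv j
  refine hA.pos_of_mulVec_nonneg hoff hconn (hcol ▸ Pi.single_nonneg.2 zero_le_one) ?_ i
  intro h
  simpa [h] using congrFun hcol j

end Matrix

theorem stmt6_general {n : ℕ} (M : Matrix (Fin n) (Fin n) ℝ)
    (hnegdef : (-M).PosDef) (hoff : ∀ i j : Fin n, i ≠ j → 0 ≤ M i j) :
    (∀ i j : Fin n, M⁻¹ i j ≤ 0) ∧
      ((SimpleGraph.fromRel (fun i j : Fin n => 0 < M i j)).Connected →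
        ∀ i j : Fin n, M⁻¹ i j < 0) := by
  have hinv : M⁻¹ = -(-M)⁻¹ := by
    refine inv_eq_right_inv ?_
    rw [mul_neg, ← neg_mul, mul_nonsing_inv _ ((isUnit_iff_isUnit_det _).1 hnegdef.isUnit)]
  have hoff' : Pairwise fun i k ↦ (-M) i k ≤ 0 := fun i k hik ↦ by
    simpa using hoff i k hik
  refine ⟨fun i j ↦ ?_, fun hconn i j ↦ ?_⟩
  · simpa [hinv] using hnegdef.inv_apply_nonneg hoff' i j
  · have hconn' : (SimpleGraph.fromRel fun i k ↦ (-M) i k < 0).Connected := by simpa using hconn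
    simpa [hinv] using hnegdef.inv_apply_pos hoff' hconn' i j

/-- If `M` is a real symmetric negative definite matrix with nonnegative off-diagonal
entries, then all entries of `M⁻¹` are `≤ 0`; moreover, if the graph with an edge
between `i ≠ j` iff `M i j > 0` is connected, then all entries of `M⁻¹` are `< 0`. -/
theorem stmt6 {n : ℕ} (M : Matrix (Fin n) (Fin n) ℝ) (hsymm : M.IsSymm)
    (hnegdef : (-M).PosDef) (hoff : ∀ i j : Fin n, i ≠ j → 0 ≤ M i j) :
    (∀ i j : Fin n, M⁻¹ i j ≤ 0) ∧
      ((SimpleGraph.fromRel (fun i j : Fin n => 0 < M i j)).Connected →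
        ∀ i j : Fin n, M⁻¹ i j < 0) :=
  stmt6_general M hnegdef hoff
end

section
/- Let H(t) = (at + b)/(ct + d) be a Möbius transformation whose coefficients a, b, c, d are nonnegative integers with ad − bc ≠ 0, and suppose t⋆ > 0 is a strictly positive fixed point of H, with H differentiable at t⋆. Then either |H'(t⋆)| < 1 or H has finite order, i.e. some iterate H∘H∘⋯∘H of H is the identity. -/
/-- Let `H(t) = (at + b)/(ct + d)` be a Möbius map with nonnegative integer
coefficients and nonzero determinant, fixing a strictly positive real `t⋆`. Then
either `|H'(t⋆)| = |(ad - bc)/(ct⋆ + d)²| < 1`, or some iterate of `H` is the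
identity (on positive reals). -/
theorem stmt9 (a b c d : ℕ) (hdet : (a : ℤ) * d - (b : ℤ) * c ≠ 0)
    (H : ℝ → ℝ) (hH : ∀ t : ℝ, H t = ((a : ℝ) * t + b) / ((c : ℝ) * t + d))
    (tstar : ℝ) (ht : 0 < tstar) (hfix : H tstar = tstar) :
    |((a : ℝ) * d - (b : ℝ) * c) / ((c : ℝ) * tstar + d) ^ 2| < 1 ∨
      ∃ k : ℕ, 1 ≤ k ∧ ∀ t : ℝ, 0 < t → H^[k] t = t := by
  rcases Nat.eq_zero_or_pos c with rfl | hc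
  · -- c = 0 : H is affine
    have hd : d ≠ 0 := by rintro rfl; simp at hdet
    have hdR : (0:ℝ) < d := by exact_mod_cast Nat.pos_of_ne_zero hd
    have hfixeq : (a : ℝ) * tstar + b = (d : ℝ) * tstar := by
      have := hfix
      rw [hH] at this
      field_simp at this
      simp only [Nat.cast_zero, mul_zero, zero_add] at this
      linarith [this, mul_comm tstar (d:ℝ)]
    rcases lt_trichotomy a d with hlt | heq | hgt
    · left
      have haR : (a:ℝ) < d := by exact_mod_cast hlt
      have hbR : (0:ℝ) ≤ b := Nat.cast_nonneg b
      have haR0 : (0:ℝ) ≤ a := Nat.cast_nonneg a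
      have hdne : (d:ℝ) ≠ 0 := ne_of_gt hdR
      simp only [Nat.cast_zero, mul_zero, sub_zero, zero_mul, zero_add]
      rw [abs_of_nonneg (by positivity), div_lt_one (by positivity)]
      nlinarith
    · right
      refine ⟨1, le_refl _, fun t htp => ?_⟩
      have hb0 : (b:ℝ) = 0 := by
        have : (a:ℝ) = d := by exact_mod_cast heq
        nlinarith
      simp only [Function.iterate_one, hH]
      rw [hb0]
      have : (a:ℝ) = d := by exact_mod_cast heq
      rw [this]
      field_simp
      simp only [Nat.cast_zero]
      ring
    · exfalso
      have haR : (d:ℝ) < a := by exact_mod_cast hgt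
      have hbR : (0:ℝ) ≤ b := Nat.cast_nonneg b
      nlinarith
  · -- c ≥ 1
    have hcR : (1:ℝ) ≤ c := by exact_mod_cast hc
    have hdR : (0:ℝ) ≤ d := Nat.cast_nonneg d
    have hbR : (0:ℝ) ≤ b := Nat.cast_nonneg b
    have haR : (0:ℝ) ≤ a := Nat.cast_nonneg a
    have hden : (0:ℝ) < (c:ℝ) * tstar + d := by nlinarith
    have hfixeq : (a : ℝ) * tstar + b = ((c:ℝ) * tstar + d) * tstar := by
      have := hfix
      rw [hH] at this
      field_simp at this
      linarith [this]
    by_cases had : a = 0 ∧ d = 0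
    · -- H t = b / (c t), an involution on positive reals
      obtain ⟨rfl, rfl⟩ := had
      have hb : b ≠ 0 := by rintro rfl; simp at hdet
      have hbpos : (0:ℝ) < b := by exact_mod_cast Nat.pos_of_ne_zero hb
      have hcpos : (0:ℝ) < c := by linarith
      right
      refine ⟨2, by norm_num, fun t htp => ?_⟩
      have h2 : H^[2] t = H (H t) := by
        simp [Function.iterate_succ, Function.comp]
      rw [h2, hH, hH]
      push_cast
      have htne : t ≠ 0 := ne_of_gt htp
      have hctne : (c:ℝ) * t ≠ 0 := by positivity
      field_simp
      ring
    · -- a + d ≥ 1 : the derivative has absolute value < 1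
      left
      have had1 : (0:ℝ) < a + d := by
        rcases Nat.eq_zero_or_pos a with rfl | ha
        · have hd0 : d ≠ 0 := fun h => had ⟨rfl, h⟩
          have : (0:ℝ) < d := by exact_mod_cast Nat.pos_of_ne_zero hd0
          simpa using this
        · have : (0:ℝ) < a := by exact_mod_cast ha
          linarith
      have key : (a:ℝ) * d - (b:ℝ) * c = ((c:ℝ) * tstar + d) * ((a:ℝ) - c * tstar) := by
        nlinarith [hfixeq, mul_self_nonneg ((c:ℝ) * tstar)]
      rw [abs_div, div_lt_one (by positivity)]
      have habs : |((c:ℝ) * tstar + d) ^ 2| = ((c:ℝ) * tstar + d) ^ 2 :=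
        abs_of_pos (by positivity)
      rw [habs, key, abs_mul, abs_of_pos hden]
      have hbound : |(a:ℝ) - c * tstar| < (c:ℝ) * tstar + d := by
        rw [abs_lt]
        constructor
        · nlinarith
        · nlinarith [hfixeq, mul_pos ht ht, hbR, hcR]
      nlinarith [abs_nonneg ((a:ℝ) - c * tstar)]
end

section
/- Let d ≥ 2 be a square-free positive integer, ε = a + b√d a totally positive unit in Q(√d) with ε > 1 and b > 0, and let N = Z ⊕ ωZ be a lattice in Q(√d) with ε·N = N. Then for all sufficiently large integers p, the element α = p + b√d satisfies: α is totally positive, and α/α' = (p² + db² + 2bp√d)/(p² − db²) is not an algebraic integer of Q(√d). Consequently, no power of α/α' equals an integer multiple of a power of ε², so log(α/α')/(2 log ε) is irrational. -/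
/-!
Write `α / α' = Q + R √d` with `Q = (p² + d b²) / (p² - d b²)` and `R ≠ 0`. Since `√d` is
irrational, an algebraic integer `Q + R √d` has minimal polynomial `X² - 2Q X + (Q² - d R²)`,
so its trace `2Q` is an integer. For `p² > 5 d b²` we have `2 < 2Q < 3`, so `α / α'` is not
an algebraic integer. Then neither is any power `(α / α')^m = k ε^{2n}`, whose right side is
integral; and a rational value `n / m` of `log(α/α') / log ε²` would give `(α/α')^m = ε^{2n}`.
-/

open Polynomial

lemma irrational_sqrt_of_squarefree {d : ℕ} (hd : 2 ≤ d) (hsf : Squarefree d) :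
    Irrational √(d : ℝ) := by
  rw [irrational_sqrt_natCast_iff]
  rintro ⟨k, rfl⟩
  rw [Nat.isUnit_iff.mp (hsf k dvd_rfl), mul_one] at hd
  omega

lemma map_minpoly_int_eq_of_irrational {x : ℝ} (hx : IsIntegral ℤ x) (hirr : Irrational x)
    {f : ℚ[X]} (hmonic : f.Monic) (hdeg : f.natDegree = 2) (hroot : aeval x f = 0) :
    (minpoly ℤ x).map (algebraMap ℤ ℚ) = f := by
  have hxQ : IsIntegral ℚ x := hx.tower_top
  rw [← minpoly.isIntegrallyClosed_eq_field_fractions' ℚ hx]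
  refine eq_of_dvd_of_natDegree_le_of_leadingCoeff (minpoly.dvd ℚ x hroot) ?_ ?_
  · rw [hdeg, minpoly.two_le_natDegree_iff hxQ]
    rintro ⟨c, rfl⟩
    exact hirr ⟨c, rfl⟩
  · rw [(minpoly.monic hxQ).leadingCoeff, hmonic.leadingCoeff]

lemma exists_intCast_eq_two_mul_of_isIntegral {d : ℕ} (hd : Irrational √(d : ℝ)) {q r : ℚ}
    (hr : r ≠ 0) (hx : IsIntegral ℤ ((q : ℝ) + r * √d)) : ∃ t : ℤ, (t : ℚ) = 2 * q := by
  set f : ℚ[X] := X ^ 2 - C (2 * q) * X + C (q ^ 2 - d * r ^ 2) with hf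
  have hmonic : f.Monic := by rw [hf]; monicity!
  have hdeg : f.natDegree = 2 := by rw [hf]; compute_degree!
  have hroot : aeval ((q : ℝ) + r * √d) f = 0 := by
    simp only [hf, map_add, map_sub, map_mul, map_pow, aeval_X, aeval_C, eq_ratCast]
    push_cast
    linear_combination (r : ℝ) ^ 2 * Real.sq_sqrt (Nat.cast_nonneg (α := ℝ) d)
  have hcoeff := congrArg (coeff · 1)
    (map_minpoly_int_eq_of_irrational hx ((hd.ratCast_mul hr).ratCast_add q) hmonic hdeg hroot)
  refine ⟨-(minpoly ℤ ((q : ℝ) + r * √d)).coeff 1, ?_⟩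
  simp only [coeff_map, hf, coeff_add, coeff_sub, coeff_C_mul, coeff_X, coeff_X_pow,
    coeff_C] at hcoeff
  push_cast
  norm_num at hcoeff
  linarith

lemma two_mul_div_ne_intCast {u c : ℚ} (hc : 0 < c) (hu : 5 * c < u) (t : ℤ) :
    (t : ℚ) ≠ 2 * ((u + c) / (u - c)) := by
  intro ht
  have hpos : 0 < u - c := by linarith
  have hlo : (2 : ℚ) < t := by rw [ht, ← mul_div_assoc, lt_div_iff₀ hpos]; linarith
  have hhi : (t : ℚ) < 3 := by rw [ht, ← mul_div_assoc, div_lt_iff₀ hpos]; linarith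
  have : (2 : ℤ) < t := by exact_mod_cast hlo
  have : t < 3 := by exact_mod_cast hhi
  omega

lemma div_sub_eq_add_mul {K : Type*} [Field K] {x y s : K} (h : x ^ 2 ≠ y ^ 2 * s ^ 2) :
    (x + y * s) / (x - y * s) =
      (x ^ 2 + y ^ 2 * s ^ 2) / (x ^ 2 - y ^ 2 * s ^ 2) +
        2 * x * y / (x ^ 2 - y ^ 2 * s ^ 2) * s := by
  have h' : x ^ 2 - y ^ 2 * s ^ 2 ≠ 0 := sub_ne_zero.mpr h
  have hsub : x - y * s ≠ 0 := fun h0 => h' (by linear_combination (x + y * s) * h0)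
  field_simp
  ring

lemma pow_ne_intCast_mul_of_not_isIntegral {A : Type*} [CommRing A] {x y : A}
    (hx : ¬IsIntegral ℤ x) (hy : IsIntegral ℤ y) {m : ℕ} (hm : 1 ≤ m) (k : ℤ) :
    x ^ m ≠ k * y := fun h =>
  hx <| IsIntegral.of_pow hm <| h ▸ (isIntegral_algebraMap (x := k)).mul hy

lemma irrational_log_div_log {x y : ℝ} (hx : 1 < x) (hy : 1 < y)
    (h : ∀ m : ℕ, 1 ≤ m → ∀ n : ℕ, x ^ m ≠ y ^ n) : Irrational (Real.log x / Real.log y) := by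
  rintro ⟨q, hq⟩
  have hlx := Real.log_pos hx
  have hly := Real.log_pos hy
  have hnum : 0 < q.num := Rat.num_pos.mpr (by exact_mod_cast hq ▸ div_pos hlx hly)
  lift q.num to ℕ using hnum.le with n hn
  apply h q.den q.pos n
  apply Real.log_injOn_pos (Set.mem_Ioi.mpr (by positivity)) (Set.mem_Ioi.mpr (by positivity))
  have hq' : (q : ℝ) * q.den = n := by rw [Rat.cast_def, ← hn]; field_simp; norm_cast
  rw [Real.log_pow, Real.log_pow, ← hq', hq]
  field_simp

theorem stmt11_general (d : ℕ) (hd2 : 2 ≤ d) (hdsf : Squarefree d) (a b : ℚ) (hb : 0 < b)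
    (hε1 : 1 < (a : ℝ) + (b : ℝ) * Real.sqrt d)
    (hint : IsIntegral ℤ ((a : ℝ) + (b : ℝ) * Real.sqrt d)) :
    ∃ P : ℕ, ∀ p : ℕ, P ≤ p →
      0 < (p : ℝ) + (b : ℝ) * Real.sqrt d ∧
      0 < (p : ℝ) - (b : ℝ) * Real.sqrt d ∧
      ¬ IsIntegral ℤ
        (((p : ℝ) + (b : ℝ) * Real.sqrt d) / ((p : ℝ) - (b : ℝ) * Real.sqrt d)) ∧
      (∀ m : ℕ, 1 ≤ m → ∀ k : ℤ, ∀ n : ℕ,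
        (((p : ℝ) + (b : ℝ) * Real.sqrt d) / ((p : ℝ) - (b : ℝ) * Real.sqrt d)) ^ m ≠
          (k : ℝ) * (((a : ℝ) + (b : ℝ) * Real.sqrt d) ^ 2) ^ n) ∧
      Irrational
        (Real.log (((p : ℝ) + (b : ℝ) * Real.sqrt d) /
            ((p : ℝ) - (b : ℝ) * Real.sqrt d)) /
          (2 * Real.log ((a : ℝ) + (b : ℝ) * Real.sqrt d))) := by
  have hirr := irrational_sqrt_of_squarefree hd2 hdsf
  have hs2 : √(d : ℝ) ^ 2 = d := Real.sq_sqrt (Nat.cast_nonneg d)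
  refine ⟨⌈5 * b ^ 2 * d⌉₊ + 1, fun p hp => ?_⟩
  have hbd : 0 < b ^ 2 * d := by positivity
  have hp1 : (1 : ℚ) ≤ p := by exact_mod_cast (Nat.le_add_left 1 _).trans hp
  have hpQ : 5 * (b ^ 2 * d) < (p : ℚ) ^ 2 := by
    have : 5 * b ^ 2 * d < (p : ℚ) := Nat.lt_of_ceil_lt hp
    nlinarith
  have hpR : (b : ℝ) ^ 2 * √(d : ℝ) ^ 2 < (p : ℝ) ^ 2 := by
    rw [hs2]; exact_mod_cast (by linarith : b ^ 2 * d < (p : ℚ) ^ 2)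
  have hbs : (0 : ℝ) < b * √d := by positivity
  have hα' : 0 < (p : ℝ) - b * √d := by nlinarith
  have hnotint : ¬IsIntegral ℤ (((p : ℝ) + b * √d) / (p - b * √d)) := by
    rw [div_sub_eq_add_mul hpR.ne', hs2]
    intro h
    obtain ⟨t, ht⟩ := exists_intCast_eq_two_mul_of_isIntegral hirr
      (q := (p ^ 2 + b ^ 2 * d) / (p ^ 2 - b ^ 2 * d)) (r := 2 * p * b / (p ^ 2 - b ^ 2 * d))
      (div_ne_zero (by positivity) (by linarith)) (by push_cast; exact h)
    exact two_mul_div_ne_intCast hbd (by linarith) t ht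
  have hpow : ∀ m : ℕ, 1 ≤ m → ∀ (k : ℤ) (n : ℕ),
      (((p : ℝ) + b * √d) / (p - b * √d)) ^ m ≠ k * ((a + b * √d) ^ 2) ^ n :=
    fun m hm k n => pow_ne_intCast_mul_of_not_isIntegral hnotint ((hint.pow 2).pow n) hm k
  refine ⟨by positivity, hα', hnotint, hpow, ?_⟩
  rw [show 2 * Real.log (a + b * √d) = Real.log ((a + b * √d) ^ 2) by simp [Real.log_pow]]
  exact irrational_log_div_log ((one_lt_div hα').mpr (by linarith)) (one_lt_pow₀ hε1 two_ne_zero)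
    fun m hm n h => hpow m hm 1 n (by simpa using h)

/-- Let `d ≥ 2` be squarefree and `ε = a + b√d` a totally positive algebraic unit
(`ε·ε' = 1`, `ε` an algebraic integer) with `ε > 1` and `b > 0`. Then for all
sufficiently large natural numbers `p`, the element `α = p + b√d` is totally
positive, `α/α'` is not an algebraic integer, no power of `α/α'` equals an integer
multiple of a power of `ε²`, and `log(α/α')/(2 log ε)` is irrational. -/
theorem stmt11 (d : ℕ) (hd2 : 2 ≤ d) (hdsf : Squarefree d) (a b : ℚ) (hb : 0 < b)
    (hε1 : 1 < (a : ℝ) + (b : ℝ) * Real.sqrt d)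
    (hunit : ((a : ℝ) + (b : ℝ) * Real.sqrt d) * ((a : ℝ) - (b : ℝ) * Real.sqrt d) = 1)
    (hint : IsIntegral ℤ ((a : ℝ) + (b : ℝ) * Real.sqrt d)) :
    ∃ P : ℕ, ∀ p : ℕ, P ≤ p →
      0 < (p : ℝ) + (b : ℝ) * Real.sqrt d ∧
      0 < (p : ℝ) - (b : ℝ) * Real.sqrt d ∧
      ¬ IsIntegral ℤ
        (((p : ℝ) + (b : ℝ) * Real.sqrt d) / ((p : ℝ) - (b : ℝ) * Real.sqrt d)) ∧
      (∀ m : ℕ, 1 ≤ m → ∀ k : ℤ, ∀ n : ℕ,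
        (((p : ℝ) + (b : ℝ) * Real.sqrt d) / ((p : ℝ) - (b : ℝ) * Real.sqrt d)) ^ m ≠
          (k : ℝ) * (((a : ℝ) + (b : ℝ) * Real.sqrt d) ^ 2) ^ n) ∧
      Irrational
        (Real.log (((p : ℝ) + (b : ℝ) * Real.sqrt d) /
            ((p : ℝ) - (b : ℝ) * Real.sqrt d)) /
          (2 * Real.log ((a : ℝ) + (b : ℝ) * Real.sqrt d))) :=
  stmt11_general d hd2 hdsf a b hb hε1 hint
end
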